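/- If a real β is weakly Chaitin T-random and strictly T-compressible (for some T ∈ (0,1]), then there exists d ≥ 2 such that the base-two expansion of β has neither a run of d consecutive zeros nor a run of d consecutive ones. -/

import Mathlib

open Filter

/-- A set of binary strings is prefix-free if no member is a proper prefix of another. -/
def PrefixFreeSet (S : Set (List Bool)) : Prop :=
  ∀ p ∈ S, ∀ q ∈ S, p <+: q → p = q

/-- A prefix-free machine: a partial recursive function on binary strings
whose domain is prefix-free. -/
structure PrefixFreeMachine where
  F : List Bool →. List Bool
  partrec : Partrec F
  prefixFree : PrefixFreeSet F.Dom

/-- Optimality of a prefix-free machine. -/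
def PrefixFreeMachine.Optimal (V : PrefixFreeMachine) : Prop :=
  ∀ F : PrefixFreeMachine, ∃ d : ℕ, ∀ p ∈ F.F.Dom,
    ∃ q ∈ V.F.Dom, V.F q = F.F p ∧ q.length ≤ p.length + d

/-- The program-size complexity of `s` with respect to the machine `M`
(`⊤` if `s` is not in the range of `M`). -/
noncomputable def Hm (M : PrefixFreeMachine) (s : List Bool) : ℕ∞ :=
  sInf ((fun p : List Bool => (p.length : ℕ∞)) '' {p | s ∈ M.F p})

/-- The complexity, viewed in the extended reals. -/
noncomputable def HmE (M : PrefixFreeMachine) (s : List Bool) : EReal :=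
  if h : Hm M s = ⊤ then ⊤ else (((Hm M s).untop h : ℕ) : EReal)

/-- The `i`-th bit (starting from `i = 0`) of the base-two expansion of the
fractional part of `α`, chosen with infinitely many zeros. -/
noncomputable def rbit (α : ℝ) (i : ℕ) : Bool :=
  decide (⌊Int.fract α * 2 ^ (i + 1)⌋ % 2 = 1)

/-- The first `n` bits of the base-two expansion of `α - ⌊α⌋`. -/
noncomputable def restr (α : ℝ) (n : ℕ) : List Bool :=
  (List.range n).map (rbit α)

/- A run of equal bits starting at position `m` makes the prefix of length `m + d` the prefix of
length `m` followed by that run. Appending a block of `c` equal bits costs at most `Tc - 1` bits of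
complexity, so `k` such blocks save `k` bits against the rate `T`; but weak `T`-randomness (with
constant `c₀`) at `m + kc` and strict `T`-compressibility (with constant `d'`) at `m` allow a
saving of at most `c₀ + d'`. Hence runs of length `(c₀ + d' + 1) c + 1` cannot occur. -/

lemma restr_add_eq_append_replicate {α : ℝ} {m j : ℕ} {b : Bool}
    (h : ∀ i < j, rbit α (m + i) = b) :
    restr α (m + j) = restr α m ++ List.replicate j b := by
  rw [restr, List.range_add, List.map_append, List.map_map, ← restr]
  congr 1
  refine List.eq_replicate_iff.2 ⟨by simp, ?_⟩
  simp only [List.mem_map, List.mem_range, Function.comp]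
  rintro _ ⟨i, hi, rfl⟩
  exact h i hi

lemma le_add_mul_of_append_replicate {γ : Type*} {H : List γ → EReal} {c : ℕ} {a : γ} {δ : ℝ}
    (h : ∀ s, H (s ++ List.replicate c a) ≤ H s + δ) (s : List γ) (j : ℕ) :
    H (s ++ List.replicate (j * c) a) ≤ H s + ((j * δ : ℝ) : EReal) := by
  induction j with
  | zero => simp
  | succ j ih =>
    calc H (s ++ List.replicate ((j + 1) * c) a)
        = H ((s ++ List.replicate (j * c) a) ++ List.replicate c a) := by
          rw [add_one_mul, List.replicate_add, List.append_assoc]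
      _ ≤ H (s ++ List.replicate (j * c) a) + δ := h _
      _ ≤ H s + ((j * δ : ℝ) : EReal) + δ := by gcongr
      _ = H s + ((((j + 1 : ℕ) : ℝ) * δ : ℝ) : EReal) := by
          rw [add_assoc, ← EReal.coe_add]
          congr 2
          push_cast
          ring

lemma le_add_of_rbit_run {H : List Bool → EReal} {T : ℝ} {β : ℝ} {c₀ d' c m k : ℕ} {b : Bool}
    (hrand : ∀ n : ℕ, 1 ≤ n → ((T * n - c₀ : ℝ) : EReal) ≤ H (restr β n))
    (hcomp : ∀ n : ℕ, 1 ≤ n → H (restr β n) ≤ ((T * n + d' : ℝ) : EReal))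
    (hstep : ∀ s, H (s ++ List.replicate c b) ≤ H s + ((T * c - 1 : ℝ) : EReal))
    (hm : 1 ≤ m) (hrun : ∀ i < k * c, rbit β (m + i) = b) :
    k ≤ c₀ + d' := by
  have hchain : ((T * (m + k * c : ℕ) - c₀ : ℝ) : EReal)
      ≤ ((T * m + d' + k * (T * c - 1) : ℝ) : EReal) :=
    calc ((T * (m + k * c : ℕ) - c₀ : ℝ) : EReal)
        ≤ H (restr β (m + k * c)) := hrand _ (by omega)
      _ = H (restr β m ++ List.replicate (k * c) b) := by
          rw [restr_add_eq_append_replicate hrun]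
      _ ≤ H (restr β m) + ((k * (T * c - 1) : ℝ) : EReal) :=
          le_add_mul_of_append_replicate hstep _ k
      _ ≤ ((T * m + d' : ℝ) : EReal) + ((k * (T * c - 1) : ℝ) : EReal) := by
          gcongr
          exact hcomp m hm
      _ = ((T * m + d' + k * (T * c - 1) : ℝ) : EReal) := (EReal.coe_add _ _).symm
  have hreal := EReal.coe_le_coe_iff.1 hchain
  push_cast at hreal
  exact_mod_cast (by linarith : (k : ℝ) ≤ c₀ + d')

theorem bounded_runs (U : PrefixFreeMachine) (T : ℝ) (β : ℝ)
    (hrand : ∃ c : ℕ, ∀ n : ℕ, 1 ≤ n →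
      ((T * n - c : ℝ) : EReal) ≤ HmE U (restr β n))
    (hcomp : ∃ d' : ℕ, ∀ n : ℕ, 1 ≤ n →
      HmE U (restr β n) ≤ ((T * n + d' : ℝ) : EReal))
    (hlem : ∃ c : ℕ, 0 < c ∧ ∀ s : List Bool,
      HmE U (s ++ List.replicate c false) ≤ HmE U s + ((T * c - 1 : ℝ) : EReal) ∧
      HmE U (s ++ List.replicate c true) ≤ HmE U s + ((T * c - 1 : ℝ) : EReal)) :
    ∃ d : ℕ, 2 ≤ d ∧
      (¬ ∃ m : ℕ, ∀ i < d, rbit β (m + i) = false) ∧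
      (¬ ∃ m : ℕ, ∀ i < d, rbit β (m + i) = true) := by
  obtain ⟨c₀, hrand⟩ := hrand
  obtain ⟨d', hcomp⟩ := hcomp
  obtain ⟨c, hc, hlem⟩ := hlem
  have hstep : ∀ b : Bool, ∀ s : List Bool,
      HmE U (s ++ List.replicate c b) ≤ HmE U s + ((T * c - 1 : ℝ) : EReal)
    | false, s => (hlem s).1
    | true, s => (hlem s).2
  -- A run starting at `m` is shifted to start at `m + 1`, where strict compressibility applies.
  have no_run : ∀ b : Bool, ¬ ∃ m : ℕ, ∀ i < (c₀ + d' + 1) * c + 1, rbit β (m + i) = b := by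
    rintro b ⟨m, hrun⟩
    have hshift : ∀ i < (c₀ + d' + 1) * c, rbit β (m + 1 + i) = b := fun i hi => by
      simpa only [add_assoc, add_comm 1 i] using hrun (1 + i) (by omega)
    have := le_add_of_rbit_run hrand hcomp (hstep b) le_add_self hshift
    omega
  exact ⟨(c₀ + d' + 1) * c + 1, by nlinarith, no_run false, no_run true⟩
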